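/- arXiv:2203.07619 — 8 statements merged into one kernel-verified Lean document; each statement's English description precedes it below -/
import Mathlib

section
/- For d = 3, the sequence k ↦ OTC^(3)_{n,k} = C(n,k) · (2n+k-2)! / (3^k · 2^(n-1) · (n-k-1)!) is (weakly) increasing in k for 0 ≤ k ≤ n-1. -/
open Nat

/-- The number of one-component `3`-combining tree-child networks with `n`
leaves and `k` reticulation nodes. -/
def OTC3 (n k : ℕ) : ℚ :=
  (n.choose k) * (Nat.factorial (2*n + k - 2) : ℚ) /
    (3 ^ k * 2 ^ (n - 1) * (Nat.factorial (n - k - 1) : ℚ))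

lemma otc3_step (n k : ℕ) (h : k + 2 ≤ n) : OTC3 n k ≤ OTC3 n (k + 1) := by
  obtain ⟨m, rfl⟩ : ∃ m, n = k + 2 + m := ⟨n - (k + 2), by omega⟩
  unfold OTC3
  have e1 : 2*(k+2+m) + k - 2 = 3*k+2*m+2 := by omega
  have e2 : 2*(k+2+m) + (k+1) - 2 = (3*k+2*m+2) + 1 := by omega
  have e3 : (k+2+m) - k - 1 = m+1 := by omega
  have e4 : (k+2+m) - (k+1) - 1 = m := by omega
  have e5 : (k+2+m) - 1 = k+1+m := by omega
  rw [e1, e2, e3, e4, e5]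
  rw [div_le_div_iff₀ (by positivity) (by positivity)]
  have f1 : (Nat.factorial ((3*k+2*m+2) + 1) : ℚ)
      = (3*(k:ℚ)+2*m+3) * (Nat.factorial (3*k+2*m+2) : ℚ) := by
    rw [Nat.factorial_succ]; push_cast; ring
  have f2 : (Nat.factorial (m+1) : ℚ) = ((m:ℚ)+1) * (Nat.factorial m : ℚ) := by
    rw [Nat.factorial_succ]; push_cast; ring
  rw [f1, f2]
  have hc : ((k+2+m).choose (k+1) : ℚ) * ((k:ℚ)+1) = ((k+2+m).choose k : ℚ) * ((m:ℚ)+2) := by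
    have h1 := Nat.choose_succ_right_eq (k+2+m) k
    have h2 : (k+2+m) - k = m + 2 := by omega
    rw [h2] at h1
    exact_mod_cast h1
  set C : ℚ := ((k+2+m).choose k : ℚ) with hC
  set C' : ℚ := ((k+2+m).choose (k+1) : ℚ) with hC'
  set F : ℚ := (Nat.factorial (3*k+2*m+2) : ℚ) with hF
  set M : ℚ := (Nat.factorial m : ℚ) with hM
  have hCpos : 0 < C := by
    rw [hC]
    exact_mod_cast Nat.choose_pos (show k ≤ k+2+m by omega)
  have hFpos : 0 < F := by rw [hF]; exact_mod_cast Nat.factorial_pos (3*k+2*m+2)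
  have hMpos : 0 < M := by rw [hM]; exact_mod_cast Nat.factorial_pos m
  have hkeyN : 3*(k+1) ≤ (m+2)*((3*k+2*m+3)*(m+1)) :=
    calc 3*(k+1) ≤ 1*((3*k+2*m+3)*1) := by omega
    _ ≤ (m+2)*((3*k+2*m+3)*(m+1)) :=
        Nat.mul_le_mul (by omega) (Nat.mul_le_mul le_rfl (by omega))
  have hkey : (3:ℚ)*((k:ℚ)+1) ≤ ((m:ℚ)+2)*((3*(k:ℚ)+2*m+3)*((m:ℚ)+1)) := by
    exact_mod_cast hkeyN
  have hP : (0:ℚ) ≤ C * F * (3^k * 2^(k+1+m) * M) := by positivity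
  have h1 := mul_le_mul_of_nonneg_right hkey hP
  have hk1 : (0:ℚ) < (k:ℚ) + 1 := by positivity
  rw [← mul_le_mul_iff_of_pos_left hk1]
  calc ((k:ℚ)+1) * (C * F * (3^(k+1) * 2^(k+1+m) * M))
      = 3*((k:ℚ)+1) * (C * F * (3^k * 2^(k+1+m) * M)) := by rw [pow_succ]; ring
    _ ≤ ((m:ℚ)+2)*((3*(k:ℚ)+2*m+3)*((m:ℚ)+1)) * (C * F * (3^k * 2^(k+1+m) * M)) := h1
    _ = ((k:ℚ)+1) * (C' * ((3*(k:ℚ)+2*m+3) * F) * (3^k * 2^(k+1+m) * (((m:ℚ)+1) * M))) := by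
        linear_combination (-(3*(k:ℚ)+2*m+3)*((m:ℚ)+1)*F*3^k*2^(k+1+m)*M) * hc

/-- For `d = 3`, the sequence `k ↦ OTC^(3)_{n,k}` is weakly increasing for
`0 ≤ k ≤ n-1`. -/
theorem otc3_monotone (n : ℕ) (hn : 1 ≤ n) :
    ∀ k₁ k₂ : ℕ, k₁ ≤ k₂ → k₂ ≤ n - 1 → OTC3 n k₁ ≤ OTC3 n k₂ := by
  intro k₁ k₂ hle hk2
  induction k₂, hle using Nat.le_induction with
  | base => exact le_refl _
  | succ m hm ih =>
    have hm2 : m + 2 ≤ n := by omega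
    exact (ih (by omega)).trans (otc3_step n m hm2)
end

section
/- For d = 3, uniformly for k = o(√n), OTC^(3)_{n,n-1-k} = (1/(k!·(k+1)!)) · (n·(3n-3)!/6^(n-1)) · (1 + O((1+k²)/n)). In particular, for each fixed k ≥ 0, the ratio OTC^(3)_{n,n-1-k} / (n·(3n-3)!/6^(n-1)) converges to 1/(k!·(k+1)!) as n → ∞. -/
open Nat Filter

/-- The number of one-component `d`-combining tree-child networks with `n`
leaves and `k` reticulation nodes (explicit formula from Theorem 1). -/
noncomputable def OTC (d n k : ℕ) : ℝ :=
  (n.choose k) * (Nat.factorial (2*n + (d - 2)*k - 2) : ℝ) /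
    ((Nat.factorial d : ℝ) ^ k * 2 ^ (n - k - 1) * (Nat.factorial (n - k - 1) : ℝ))

lemma otc3_factor_tendsto (i : ℕ) :
    Tendsto (fun n : ℕ => (3 * ((n : ℝ) - 1 - i)) / (3 * (n : ℝ) - 3 - i))
      atTop (nhds 1) := by
  have h1 : Tendsto (fun n : ℕ => (3 : ℝ) - (3 * i + 3) / n) atTop (nhds 3) := by
    simpa using tendsto_const_nhds.sub
      (tendsto_const_div_atTop_nhds_zero_nat (3 * (i : ℝ) + 3))
  have h2 : Tendsto (fun n : ℕ => (3 : ℝ) - ((i : ℝ) + 3) / n) atTop (nhds 3) := by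
    simpa using tendsto_const_nhds.sub
      (tendsto_const_div_atTop_nhds_zero_nat ((i : ℝ) + 3))
  have h := h1.div h2 (by norm_num)
  rw [show (3 : ℝ) / 3 = 1 by norm_num] at h
  refine h.congr' ?_
  filter_upwards [eventually_ge_atTop (i + 2)] with n hn
  have hn' : (i : ℝ) + 2 ≤ (n : ℝ) := by exact_mod_cast hn
  have hn0 : (n : ℝ) ≠ 0 := Nat.cast_ne_zero.2 (by omega)
  have hden : 3 * (n : ℝ) - 3 - i ≠ 0 := by nlinarith
  have hden2 : (3 : ℝ) - ((i : ℝ) + 3) / n ≠ 0 := by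
    rw [sub_ne_zero]
    intro hc
    apply hden
    have hc' : (3:ℝ) * n = (i + 3) := by
      field_simp at hc
      linarith
    linarith
  simp only [Pi.div_apply]
  rw [div_eq_div_iff hden2 hden]
  field_simp
  ring

/-- For `d = 3` and each fixed `k`, the ratio
`OTC^(3)_{n,n-1-k} / (n·(3n-3)!/6^(n-1))` converges to `1/(k!·(k+1)!)` as
`n → ∞`. -/
theorem otc3_near_max_asymptotics (k : ℕ) :
    Tendsto (fun n : ℕ =>
        OTC 3 n (n - 1 - k) * 6 ^ (n - 1) / ((n : ℝ) * (Nat.factorial (3*n - 3) : ℝ)))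
      atTop (nhds (1 / ((Nat.factorial k : ℝ) * (Nat.factorial (k + 1) : ℝ)))) := by
  have hprod : Tendsto (fun n : ℕ =>
      ∏ i ∈ Finset.range k, (3 * ((n : ℝ) - 1 - i)) / (3 * (n : ℝ) - 3 - i))
      atTop (nhds 1) := by
    have := tendsto_finset_prod (Finset.range k)
      (fun i _ => otc3_factor_tendsto i)
    simpa using this
  have hmain : Tendsto (fun n : ℕ =>
      (1 / ((Nat.factorial k : ℝ) * (Nat.factorial (k + 1) : ℝ))) *
        ∏ i ∈ Finset.range k, (3 * ((n : ℝ) - 1 - i)) / (3 * (n : ℝ) - 3 - i))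
      atTop (nhds (1 / ((Nat.factorial k : ℝ) * (Nat.factorial (k + 1) : ℝ)))) := by
    simpa using hprod.const_mul (1 / ((Nat.factorial k : ℝ) * (Nat.factorial (k + 1) : ℝ)))
  refine hmain.congr' ?_
  filter_upwards [eventually_ge_atTop (k + 2)] with n hn
  -- notation
  have hkn : k + 1 ≤ n := by omega
  -- nat simplifications
  have e1 : 2 * n + (3 - 2) * (n - 1 - k) - 2 = 3 * n - 3 - k := by omega
  have e2 : n - (n - 1 - k) - 1 = k := by omega
  have e3 : n.choose (n - 1 - k) = n.choose (k + 1) := by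
    rw [show n - 1 - k = n - (k + 1) by omega, Nat.choose_symm hkn]
  -- factorial decomposition
  have F1 : (3 * n - 3).factorial =
      (3 * n - 3 - k).factorial * ∏ i ∈ Finset.range k, (3 * n - 3 - i) := by
    rw [← Nat.descFactorial_eq_prod_range, Nat.factorial_mul_descFactorial (by omega)]
  have F2 : (k + 1).factorial * n.choose (k + 1) =
      n * ∏ i ∈ Finset.range k, (n - 1 - i) := by
    rw [← Nat.descFactorial_eq_factorial_mul_choose, Nat.descFactorial_eq_prod_range,
      Finset.prod_range_succ']
    simp [Nat.sub_sub, Nat.add_comm, mul_comm]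
  -- real versions
  set P : ℝ := ∏ i ∈ Finset.range k, ((3 * n - 3 - i : ℕ) : ℝ) with hP
  set Q : ℝ := ∏ i ∈ Finset.range k, ((n - 1 - i : ℕ) : ℝ) with hQ
  have F1R : ((3 * n - 3).factorial : ℝ) = ((3 * n - 3 - k).factorial : ℝ) * P := by
    rw [F1]; push_cast [hP]; ring
  have F2R : ((k + 1).factorial : ℝ) * (n.choose (k + 1) : ℝ) = (n : ℝ) * Q := by
    rw [← Nat.cast_mul, F2]; push_cast [hQ]; ring
  have hPne : P ≠ 0 := by
    rw [hP]
    apply Finset.prod_ne_zero_iff.2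
    intro i hi
    have := Finset.mem_range.1 hi
    have : 0 < 3 * n - 3 - i := by omega
    positivity
  have hnne : (n : ℝ) ≠ 0 := Nat.cast_ne_zero.2 (by omega)
  -- rewrite the RHS product in terms of P and Q
  have hprodeq : (∏ i ∈ Finset.range k, (3 * ((n : ℝ) - 1 - i)) / (3 * (n : ℝ) - 3 - i))
      = 3 ^ k * Q / P := by
    have hcong : ∀ i ∈ Finset.range k, 3 * ((n : ℝ) - 1 - i) / (3 * (n : ℝ) - 3 - i)
        = (3 * ((n - 1 - i : ℕ) : ℝ)) / ((3 * n - 3 - i : ℕ) : ℝ) := by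
      intro i hi
      have hik := Finset.mem_range.1 hi
      have c1 : ((n - 1 - i : ℕ) : ℝ) = (n : ℝ) - 1 - i := by
        rw [Nat.cast_sub (by omega), Nat.cast_sub (by omega)]
        push_cast
        ring
      have c2 : ((3 * n - 3 - i : ℕ) : ℝ) = 3 * (n : ℝ) - 3 - i := by
        rw [Nat.cast_sub (by omega), Nat.cast_sub (by omega)]
        push_cast
        ring
      rw [c1, c2]
    rw [Finset.prod_congr rfl hcong, Finset.prod_div_distrib, Finset.prod_mul_distrib,
      Finset.prod_const, Finset.card_range, hP, hQ]
  -- unfold and compute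
  simp only [OTC, e1, e2, e3]
  rw [hprodeq, F1R]
  have h6 : (Nat.factorial 3 : ℝ) = 6 := by norm_num [Nat.factorial]
  rw [h6]
  have hpow : (6 : ℝ) ^ (n - 1) = 6 ^ (n - 1 - k) * 6 ^ k := by
    rw [← pow_add]; congr 1; omega
  rw [hpow]
  have hchoose : (n.choose (k + 1) : ℝ) = (n : ℝ) * Q / ((k + 1).factorial : ℝ) := by
    rw [eq_div_iff (by positivity)]
    linarith [F2R]
  rw [hchoose]
  have hFne : ((3 * n - 3 - k).factorial : ℝ) ≠ 0 := by positivity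
  have hkf : (Nat.factorial k : ℝ) ≠ 0 := by positivity
  have hk1f : (Nat.factorial (k + 1) : ℝ) ≠ 0 := by positivity
  field_simp
  rw [show (6:ℝ) ^ k = 2 ^ k * 3 ^ k by rw [show (6:ℝ) = 2 * 3 by norm_num, mul_pow]]
  ring
end

section
/- For d = 3, as n → ∞, OTC^(3)_n := Σ_{k=0}^{n-1} OTC^(3)_{n,k} satisfies OTC^(3)_n ~ I₁(2) · n·(3n-3)!/6^(n-1), where I₁(2) = Σ_{k≥0} 1/(k!·(k+1)!) is the modified Bessel function of the first kind evaluated so that I₁(2) = Σ_{k≥0} 1/(k!(k+1)!). -/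
open Nat Filter

lemma otc_key (n j : ℕ) (hj : j < n) :
    OTC 3 n (n-1-j) * 6^(n-1) / ((n:ℝ) * ((3*n-3)! : ℝ))
      = ((3:ℝ)^j * (((n-1).descFactorial j : ℕ) : ℝ) / (((3*n-3).descFactorial j : ℕ) : ℝ))
        / ((j ! : ℝ) * ((j+1)! : ℝ)) := by
  have hn : 1 ≤ n := by omega
  have e1 : 2*n + (3-2)*(n-1-j) - 2 = 3*n-3-j := by omega
  have e2 : n - (n-1-j) - 1 = j := by omega
  have e3 : n.choose (n-1-j) = n.choose (j+1) := by
    rw [← Nat.choose_symm (by omega : j+1 ≤ n)]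
    congr 1; omega
  rw [OTC, e1, e2, e3]
  have h36 : ((3! : ℕ) : ℝ) = 6 := by norm_num [Nat.factorial]
  rw [h36]
  have dc : (n.choose (j+1) : ℝ) = (n ! : ℝ) / (((j+1)! : ℝ) * ((n-1-j)! : ℝ)) := by
    rw [Nat.cast_choose ℝ (by omega : j+1 ≤ n), show n - (j+1) = n-1-j from by omega]
  have d2 : (((n-1).descFactorial j : ℕ) : ℝ) = ((n-1)! : ℝ) / ((n-1-j)! : ℝ) := by
    have h := Nat.factorial_mul_descFactorial (show j ≤ n-1 by omega)
    rw [eq_div_iff (by exact_mod_cast (n-1-j).factorial_ne_zero), ← Nat.cast_mul,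
      Nat.mul_comm, h]
  have d3 : (((3*n-3).descFactorial j : ℕ) : ℝ) = ((3*n-3)! : ℝ) / ((3*n-3-j)! : ℝ) := by
    have h := Nat.factorial_mul_descFactorial (show j ≤ 3*n-3 by omega)
    rw [eq_div_iff (by exact_mod_cast (3*n-3-j).factorial_ne_zero), ← Nat.cast_mul,
      Nat.mul_comm, h]
  have dn : (n ! : ℝ) = (n : ℝ) * ((n-1)! : ℝ) := by
    exact_mod_cast (Nat.mul_factorial_pred (by omega)).symm
  have p6 : (6:ℝ)^(n-1) = 6^(n-1-j) * 6^j := by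
    rw [← pow_add]; congr 1; omega
  have p6j : (6:ℝ)^j = 2^j * 3^j := by rw [← mul_pow]; norm_num
  rw [dc, d2, d3, dn, p6, p6j]
  have f1 : ((n-1-j)! : ℝ) ≠ 0 := by exact_mod_cast (n-1-j).factorial_ne_zero
  have f2 : ((3*n-3-j)! : ℝ) ≠ 0 := by exact_mod_cast (3*n-3-j).factorial_ne_zero
  have f3 : ((3*n-3)! : ℝ) ≠ 0 := by exact_mod_cast (3*n-3).factorial_ne_zero
  have f4 : ((n-1)! : ℝ) ≠ 0 := by exact_mod_cast (n-1).factorial_ne_zero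
  have f5 : ((j)! : ℝ) ≠ 0 := by exact_mod_cast j.factorial_ne_zero
  have f6 : ((j+1)! : ℝ) ≠ 0 := by exact_mod_cast (j+1).factorial_ne_zero
  have f7 : (n : ℝ) ≠ 0 := by exact_mod_cast (by omega : n ≠ 0)
  have f8 : (6:ℝ)^(n-1-j) ≠ 0 := by positivity
  field_simp

/-- ℕ bound: `3^j · (n-1)↓j ≤ (3n-3)↓j`. -/
lemma otc_nat_bound (n j : ℕ) : 3^j * (n-1).descFactorial j ≤ (3*n-3).descFactorial j := by
  rw [Nat.descFactorial_eq_prod_range, Nat.descFactorial_eq_prod_range]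
  have e : 3^j * ∏ i ∈ Finset.range j, (n-1-i) = ∏ i ∈ Finset.range j, 3*(n-1-i) := by
    rw [Finset.prod_mul_distrib, Finset.prod_const, Finset.card_range]
  rw [e]
  exact Finset.prod_le_prod' fun i _ => by omega

lemma otc_ratio_tendsto (j : ℕ) :
    Tendsto (fun n : ℕ => (3:ℝ)^j * (((n-1).descFactorial j : ℕ) : ℝ)
        / (((3*n-3).descFactorial j : ℕ) : ℝ)) atTop (nhds 1) := by
  have h : Tendsto (fun n : ℕ => ∏ i ∈ Finset.range j,
      ((3*(n-1-i) : ℕ) : ℝ) / ((3*n-3-i : ℕ) : ℝ)) atTop (nhds 1) := by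
    have := tendsto_finset_prod (f := fun (i : ℕ) (n : ℕ) =>
        ((3*(n-1-i) : ℕ) : ℝ) / ((3*n-3-i : ℕ) : ℝ)) (x := atTop)
        (a := fun _ => (1:ℝ)) (Finset.range j) ?_
    · simpa using this
    · intro i _
      have hD : Tendsto (fun n : ℕ => ((3*n-3-i : ℕ) : ℝ)) atTop atTop := by
        apply tendsto_natCast_atTop_atTop.comp
        apply tendsto_atTop_atTop.2
        exact fun b => ⟨b + i + 3, fun n hn => by omega⟩
      have h0 : Tendsto (fun n : ℕ => 1 - (2*i : ℝ) / ((3*n-3-i : ℕ) : ℝ)) atTop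
          (nhds 1) := by
        have := (tendsto_const_nhds (x := (2*i : ℝ)) (f := atTop (α := ℕ))).div_atTop hD
        simpa using (tendsto_const_nhds (x := (1:ℝ))).sub this
      apply h0.congr'
      filter_upwards [eventually_ge_atTop (i+2)] with n hn
      have hD0 : ((3*n-3-i : ℕ) : ℝ) ≠ 0 := by
        exact_mod_cast (by omega : (3*n-3-i : ℕ) ≠ 0)
      have hND : ((3*(n-1-i) : ℕ) : ℝ) = ((3*n-3-i : ℕ) : ℝ) - 2*i := by
        have e : (3*(n-1-i) : ℕ) + 2*i = 3*n-3-i := by omega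
        have := congrArg (Nat.cast : ℕ → ℝ) e
        push_cast at this ⊢
        linarith
      rw [hND, sub_div, div_self hD0]
  apply h.congr'
  filter_upwards [eventually_ge_atTop 1] with n hn
  rw [Nat.descFactorial_eq_prod_range, Nat.descFactorial_eq_prod_range]
  push_cast
  rw [Finset.prod_div_distrib]
  congr 1
  rw [Finset.prod_mul_distrib, Finset.prod_const, Finset.card_range]

noncomputable def otcT (n j : ℕ) : ℝ :=
  if j < n then OTC 3 n (n-1-j) * 6^(n-1) / ((n:ℝ) * ((3*n-3)! : ℝ)) else 0

lemma otcT_desc (n j : ℕ) (hj : j < n) :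
    otcT n j = ((3:ℝ)^j * (((n-1).descFactorial j : ℕ) : ℝ)
      / (((3*n-3).descFactorial j : ℕ) : ℝ)) / ((j ! : ℝ) * ((j+1)! : ℝ)) := by
  rw [otcT, if_pos hj, otc_key n j hj]

/-- For `d = 3`: `OTC^(3)_n := Σ_{k=0}^{n-1} OTC^(3)_{n,k}` satisfies
`OTC^(3)_n ~ I₁(2) · n·(3n-3)!/6^(n-1)` where `I₁(2) = Σ_{k≥0} 1/(k!(k+1)!)`. -/
theorem otc3_total_asymptotics :
    Tendsto (fun n : ℕ =>
        (∑ k ∈ Finset.range n, OTC 3 n k) * 6 ^ (n - 1) /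
          ((n : ℝ) * (Nat.factorial (3*n - 3) : ℝ)))
      atTop
      (nhds (∑' k : ℕ, 1 / ((Nat.factorial k : ℝ) * (Nat.factorial (k + 1) : ℝ)))) := by
  have hfun : ∀ n : ℕ, (∑ k ∈ Finset.range n, OTC 3 n k) * 6 ^ (n - 1) /
      ((n : ℝ) * ((3*n - 3)! : ℝ)) = ∑' j, otcT n j := by
    intro n
    calc (∑ k ∈ Finset.range n, OTC 3 n k) * 6 ^ (n - 1) / ((n : ℝ) * ((3*n - 3)! : ℝ))
        = ∑ k ∈ Finset.range n,
            OTC 3 n k * 6 ^ (n - 1) / ((n : ℝ) * ((3*n - 3)! : ℝ)) := by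
          rw [Finset.sum_mul, Finset.sum_div]
      _ = ∑ j ∈ Finset.range n, otcT n j := by
          rw [← Finset.sum_range_reflect
            (fun k => OTC 3 n k * 6 ^ (n - 1) / ((n : ℝ) * ((3*n - 3)! : ℝ))) n]
          exact Finset.sum_congr rfl fun j hj =>
            (by rw [otcT, if_pos (Finset.mem_range.1 hj)])
      _ = ∑' j, otcT n j :=
          (tsum_eq_sum fun j hj => if_neg fun h => hj (Finset.mem_range.2 h)).symm
  have hsum : Summable (fun j : ℕ => 1 / (j ! : ℝ)) := by
    simpa using Real.summable_pow_div_factorial 1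
  have hlim : ∀ j : ℕ, Tendsto (fun n => otcT n j) atTop
      (nhds (1 / ((j ! : ℝ) * ((j+1)! : ℝ)))) := by
    intro j
    have h := (otc_ratio_tendsto j).div_const ((j ! : ℝ) * ((j+1)! : ℝ))
    apply h.congr'
    filter_upwards [eventually_gt_atTop j] with n hn
    rw [otcT_desc n j hn]
  have hbound : ∀ n : ℕ, ∀ j : ℕ, ‖otcT n j‖ ≤ 1 / (j ! : ℝ) := by
    intro n j
    by_cases h : j < n
    · have hn : 1 ≤ n := by omega
      have hBpos : 0 < ((3*n-3).descFactorial j : ℕ) := by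
        rcases Nat.eq_zero_or_pos ((3*n-3).descFactorial j) with h0 | h0
        · exfalso
          have := Nat.factorial_mul_descFactorial (show j ≤ 3*n-3 by omega)
          rw [h0, Nat.mul_zero] at this
          exact (3*n-3).factorial_ne_zero this.symm
        · exact h0
      have hB : (0:ℝ) < (((3*n-3).descFactorial j : ℕ) : ℝ) := by exact_mod_cast hBpos
      have hratio : (3:ℝ)^j * (((n-1).descFactorial j : ℕ) : ℝ)
          / (((3*n-3).descFactorial j : ℕ) : ℝ) ≤ 1 := by
        rw [div_le_one hB]
        calc (3:ℝ)^j * (((n-1).descFactorial j : ℕ) : ℝ)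
            = ((3^j * (n-1).descFactorial j : ℕ) : ℝ) := by push_cast; ring
          _ ≤ (((3*n-3).descFactorial j : ℕ) : ℝ) := by
              exact_mod_cast otc_nat_bound n j
      have hnonneg : (0:ℝ) ≤ (3:ℝ)^j * (((n-1).descFactorial j : ℕ) : ℝ)
          / (((3*n-3).descFactorial j : ℕ) : ℝ) := by positivity
      have hfj : (0:ℝ) < (j ! : ℝ) := by exact_mod_cast j.factorial_pos
      have hfj1 : (0:ℝ) < ((j+1)! : ℝ) := by exact_mod_cast (j+1).factorial_pos
      rw [otcT_desc n j h, Real.norm_eq_abs, abs_of_nonneg (by positivity)]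
      calc ((3:ℝ)^j * (((n-1).descFactorial j : ℕ) : ℝ)
            / (((3*n-3).descFactorial j : ℕ) : ℝ)) / ((j ! : ℝ) * ((j+1)! : ℝ))
          ≤ 1 / ((j ! : ℝ) * ((j+1)! : ℝ)) := by
            apply div_le_div_of_nonneg_right hratio ?_ |>.trans_eq rfl
            positivity
        _ ≤ 1 / (j ! : ℝ) := by
            apply one_div_le_one_div_of_le hfj
            nlinarith [Nat.one_le_iff_ne_zero.2 (j+1).factorial_ne_zero,
              (show (1:ℝ) ≤ ((j+1)! : ℝ) by exact_mod_cast (j+1).factorial_pos)]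
    · rw [otcT, if_neg h, norm_zero]
      positivity
  have main := tendsto_tsum_of_dominated_convergence (f := fun n j => otcT n j)
    (g := fun j : ℕ => 1 / ((j ! : ℝ) * ((j+1)! : ℝ)))
    (bound := fun j : ℕ => 1 / (j ! : ℝ)) hsum hlim
    (Eventually.of_forall hbound)
  exact main.congr fun n => (hfun n).symm
end

section
/- For fixed d ≥ 4, OTC^(d)_n := Σ_{k=0}^{n-1} OTC^(d)_{n,k} satisfies OTC^(d)_n ~ OTC^(d)_{n,n-1} as n → ∞, i.e. lim_{n→∞} OTC^(d)_n / OTC^(d)_{n,n-1} = 1. -/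
open Nat Filter

lemma otc_nonneg (d n k : ℕ) : 0 ≤ OTC d n k := by
  unfold OTC; positivity

lemma otc_eval (e k j : ℕ) : OTC (e+4) (k+j+2) k =
    ((k+j+2).choose k : ℝ) * (((e+4)*k + 2*j + 2).factorial : ℝ) /
      (((e+4).factorial : ℝ)^k * 2^(j+1) * ((j+1).factorial : ℝ)) := by
  unfold OTC
  have h1 : 2*(k+j+2) + (e+4-2)*k - 2 = (e+4)*k + 2*j + 2 := by
    rw [show e+4-2 = e+2 by omega]
    have : 2*(k+j+2) + (e+2)*k = ((e+4)*k + 2*j + 2) + 2 := by ring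
    omega
  have h2 : k+j+2 - k - 1 = j+1 := by omega
  rw [h1, h2]

lemma otc_last_eval (e k j : ℕ) : OTC (e+4) (k+j+2) (k+j+1) =
    ((k+j+2 : ℕ) : ℝ) * (((e+4)*(k+j+1)).factorial : ℝ) / ((e+4).factorial : ℝ)^(k+j+1) := by
  unfold OTC
  have h1 : 2*(k+j+2) + (e+4-2)*(k+j+1) - 2 = (e+4)*(k+j+1) := by
    rw [show e+4-2 = e+2 by omega]
    have : 2*(k+j+2) + (e+2)*(k+j+1) = (e+4)*(k+j+1) + 2 := by ring
    omega
  have h2 : k+j+2 - (k+j+1) - 1 = 0 := by omega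
  have h3 : (k+j+2).choose (k+j+1) = k+j+2 := by
    rw [show k+j+2 = (k+j+1)+1 by omega, Nat.choose_succ_self_right]
  rw [h1, h2, h3]
  simp

lemma fact_mul_pow_le (A n : ℕ) (h : n ≤ A + 1) (t : ℕ) :
    A.factorial * n ^ t ≤ (A + t).factorial := by
  induction t with
  | zero => simp
  | succ t ih =>
      have h1 : n ≤ A + t + 1 := by omega
      calc A.factorial * n ^ (t+1) = (A.factorial * n ^ t) * n := by ring
        _ ≤ (A + t).factorial * (A + t + 1) := Nat.mul_le_mul ih h1
        _ = (A + t + 1).factorial := by rw [Nat.factorial_succ]; ring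

lemma key_nat (e k j : ℕ) :
    (k + j + 2).choose k * (k + j + 2) ^ (j + 1) * ((e+4)*k + 2*j + 2).factorial
      ≤ (k + j + 2) * (j + 1).factorial * ((e+4)*(k+j+1)).factorial := by
  set n := k + j + 2 with hn
  set A := (e+4)*k + 2*j + 2 with hA
  have hB : (e+4)*(k+j+1) = A + (e+2)*(j+1) := by ring
  have hfac : A.factorial * n ^ ((e+2)*(j+1)) ≤ ((e+4)*(k+j+1)).factorial := by
    rw [hB]
    refine fact_mul_pow_le A n ?_ _
    have := Nat.le_mul_of_pos_left k (show 0 < e + 4 by omega)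
    omega
  have hch : n.choose k ≤ n ^ (j + 2) := by
    have : n.choose k = n.choose (j + 2) := by
      rw [← Nat.choose_symm (by omega : k ≤ n)]
      congr 1; omega
    rw [this]; exact Nat.choose_le_pow _ _
  have hpow : n ^ (2*(j+1)) ≤ n ^ ((e+2)*(j+1)) :=
    Nat.pow_le_pow_right (by omega) (by nlinarith)
  calc n.choose k * n ^ (j+1) * A.factorial
      ≤ n ^ (j+2) * n ^ (j+1) * A.factorial := by
        exact Nat.mul_le_mul_right _ (Nat.mul_le_mul_right _ hch)
    _ = n * (A.factorial * n ^ (2*(j+1))) := by ring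
    _ ≤ n * (A.factorial * n ^ ((e+2)*(j+1))) := by
        exact Nat.mul_le_mul_left _ (Nat.mul_le_mul_left _ hpow)
    _ ≤ n * ((e+4)*(k+j+1)).factorial := Nat.mul_le_mul_left _ hfac
    _ ≤ n * (j+1).factorial * ((e+4)*(k+j+1)).factorial :=
        Nat.mul_le_mul_right _ (Nat.le_mul_of_pos_right n (Nat.factorial_pos _))

lemma otc_ratio (e k j : ℕ) :
    OTC (e+4) (k+j+2) k ≤ OTC (e+4) (k+j+2) (k+j+1) *
      (((e+4).factorial : ℝ) / (2 * ((k+j+2 : ℕ) : ℝ)))^(j+1) := by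
  have hD : (0:ℝ) < ((e+4).factorial : ℝ) := by exact_mod_cast Nat.factorial_pos _
  have hN : (0:ℝ) < ((k+j+2 : ℕ) : ℝ) := by positivity
  have hEq : OTC (e+4) (k+j+2) (k+j+1) * (((e+4).factorial : ℝ) / (2 * ((k+j+2 : ℕ) : ℝ)))^(j+1)
      = ((k+j+2 : ℕ) : ℝ) * (((e+4)*(k+j+1)).factorial : ℝ) /
        (((e+4).factorial : ℝ)^k * 2^(j+1) * ((k+j+2 : ℕ) : ℝ)^(j+1)) := by
    rw [otc_last_eval]
    have h2 : ((k+j+2 : ℕ) : ℝ) ≠ 0 := ne_of_gt hN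
    have h3 : ((e+4).factorial : ℝ) ≠ 0 := ne_of_gt hD
    rw [div_pow, mul_pow, show k+j+1 = k + (j+1) by omega, pow_add]
    field_simp
  rw [otc_eval, hEq, div_le_div_iff₀ (by positivity) (by positivity)]
  have H := Nat.mul_le_mul_right ((e+4).factorial ^ k * 2 ^ (j+1)) (key_nat e k j)
  calc ((k+j+2).choose k : ℝ) * (((e+4)*k + 2*j + 2).factorial : ℝ) *
        (((e+4).factorial : ℝ)^k * 2^(j+1) * ((k+j+2 : ℕ) : ℝ)^(j+1))
      = (((k + j + 2).choose k * (k + j + 2) ^ (j + 1) * ((e+4)*k + 2*j + 2).factorial *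
          ((e+4).factorial ^ k * 2 ^ (j+1)) : ℕ) : ℝ) := by push_cast; ring
    _ ≤ (((k + j + 2) * (j + 1).factorial * ((e+4)*(k+j+1)).factorial *
          ((e+4).factorial ^ k * 2 ^ (j+1)) : ℕ) : ℝ) := by exact_mod_cast H
    _ = ((k+j+2 : ℕ) : ℝ) * (((e+4)*(k+j+1)).factorial : ℝ) *
        (((e+4).factorial : ℝ)^k * 2^(j+1) * ((j+1).factorial : ℝ)) := by push_cast; ring

lemma geom_le_two (q : ℝ) (h0 : 0 ≤ q) (h : q ≤ 1/2) (m : ℕ) :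
    ∑ i ∈ Finset.range m, q ^ i ≤ 2 := by
  induction m with
  | zero => norm_num
  | succ m ih =>
      rw [geom_sum_succ]
      have hS : 0 ≤ ∑ i ∈ Finset.range m, q ^ i :=
        Finset.sum_nonneg fun i _ => pow_nonneg h0 i
      nlinarith

/-- For fixed `d ≥ 4`: `OTC^(d)_n := Σ_{k=0}^{n-1} OTC^(d)_{n,k}` satisfies
`OTC^(d)_n ~ OTC^(d)_{n,n-1}` as `n → ∞`. -/
theorem otc_total_asymptotics (d : ℕ) (hd : 4 ≤ d) :
    Tendsto (fun n : ℕ => (∑ k ∈ Finset.range n, OTC d n k) / OTC d n (n - 1))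
      atTop (nhds 1) := by
  obtain ⟨e, rfl⟩ : ∃ e, d = e + 4 := ⟨d - 4, by omega⟩
  have hD0 : (0:ℝ) < ((e+4).factorial : ℝ) := by exact_mod_cast Nat.factorial_pos _
  have hupper : Tendsto (fun n : ℕ => 1 + ((e+4).factorial : ℝ) / (n:ℝ)) atTop (nhds 1) := by
    have h0 : Tendsto (fun n : ℕ => ((e+4).factorial : ℝ) / (n:ℝ)) atTop (nhds 0) :=
      Tendsto.div_atTop tendsto_const_nhds tendsto_natCast_atTop_atTop
    simpa using tendsto_const_nhds.add h0
  have hboth : ∀ᶠ n : ℕ in atTop,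
      1 ≤ (∑ k ∈ Finset.range n, OTC (e+4) n k) / OTC (e+4) n (n - 1) ∧
      (∑ k ∈ Finset.range n, OTC (e+4) n k) / OTC (e+4) n (n - 1)
        ≤ 1 + ((e+4).factorial : ℝ) / (n:ℝ) := by
    rw [eventually_atTop]
    refine ⟨(e+4).factorial + 2, fun n hn => ?_⟩
    obtain ⟨K, rfl⟩ : ∃ K, n = K + 2 := ⟨n - 2, by omega⟩
    have hP : 0 < OTC (e+4) (K+2) (K+1) := by
      have h := otc_last_eval e K 0
      simp only [Nat.add_zero] at h
      rw [h]
      positivity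
    have hN0 : (0:ℝ) < ((K+2 : ℕ) : ℝ) := by positivity
    have hq0 : (0:ℝ) ≤ ((e+4).factorial : ℝ) / (2 * ((K+2 : ℕ) : ℝ)) := by positivity
    have hDK : ((e+4).factorial : ℝ) ≤ ((K+2 : ℕ) : ℝ) := by
      exact_mod_cast (by omega : (e+4).factorial ≤ K+2)
    have hq : ((e+4).factorial : ℝ) / (2 * ((K+2 : ℕ) : ℝ)) ≤ 1/2 := by
      rw [div_le_iff₀ (by positivity)]
      linarith
    have hterm : ∀ k ∈ Finset.range (K+1), OTC (e+4) (K+2) k ≤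
        OTC (e+4) (K+2) (K+1) *
          (((e+4).factorial : ℝ) / (2 * ((K+2 : ℕ) : ℝ)))^(K-k+1) := by
      intro k hk
      rw [Finset.mem_range] at hk
      obtain ⟨j, rfl⟩ : ∃ j, K = k + j := ⟨K - k, by omega⟩
      rw [show k + j - k + 1 = j + 1 by omega]
      exact otc_ratio e k j
    set S := ∑ k ∈ Finset.range (K+1), OTC (e+4) (K+2) k with hSdef
    set P := OTC (e+4) (K+2) (K+1) with hPdef
    set q := ((e+4).factorial : ℝ) / (2 * ((K+2 : ℕ) : ℝ)) with hqdef
    have hS0 : 0 ≤ S := Finset.sum_nonneg fun k _ => otc_nonneg _ _ _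
    have hSle : S ≤ P * (((e+4).factorial : ℝ) / ((K+2 : ℕ) : ℝ)) := by
      calc S ≤ ∑ k ∈ Finset.range (K+1), P * q^(K-k+1) := Finset.sum_le_sum hterm
        _ = P * ∑ k ∈ Finset.range (K+1), q^(K-k+1) := by rw [Finset.mul_sum]
        _ = P * ∑ i ∈ Finset.range (K+1), q^(i+1) := by
            congr 1
            rw [← Finset.sum_range_reflect (fun i => q^(i+1)) (K+1)]
            exact Finset.sum_congr rfl fun i _ => by congr 1
        _ = P * (q * ∑ i ∈ Finset.range (K+1), q^i) := by
            congr 1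
            rw [Finset.mul_sum]
            exact Finset.sum_congr rfl fun i _ => by rw [_root_.pow_succ']
        _ ≤ P * (q * 2) := by
            have hg := geom_le_two q hq0 hq (K+1)
            have : q * ∑ i ∈ Finset.range (K+1), q^i ≤ q * 2 :=
              mul_le_mul_of_nonneg_left hg hq0
            exact mul_le_mul_of_nonneg_left this (le_of_lt hP)
        _ = P * (((e+4).factorial : ℝ) / ((K+2 : ℕ) : ℝ)) := by
            rw [hqdef]
            field_simp
    have hsum : ∑ k ∈ Finset.range (K+2), OTC (e+4) (K+2) k = S + P :=
      Finset.sum_range_succ _ (K+1)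
    rw [show K+2-1 = K+1 by omega, hsum]
    constructor
    · rw [le_div_iff₀ hP]; linarith
    · rw [div_le_iff₀ hP]
      have h1 : (1 + ((e+4).factorial : ℝ) / ((K+2 : ℕ) : ℝ)) * P
          = P * (((e+4).factorial : ℝ) / ((K+2 : ℕ) : ℝ)) + P := by ring
      push_cast at h1 hSle ⊢
      linarith
  exact tendsto_of_tendsto_of_tendsto_of_le_of_le' tendsto_const_nhds hupper
    (hboth.mono fun n h => h.1) (hboth.mono fun n h => h.2)
end

section
/- Assume that for all 0 ≤ k ≤ n-2 one has 2(n-k-1)·a_k ≤ a_{k+1} for a sequence of nonnegative reals a_0,...,a_{n-1}. Then a_{n-1} ≤ Σ_{k=0}^{n-1} a_k ≤ √e · a_{n-1}. -/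
/-- If a sequence of nonnegative reals `a_0, …, a_{n-1}` satisfies
`2(n-k-1)·a_k ≤ a_{k+1}` for `0 ≤ k ≤ n-2`, then
`a_{n-1} ≤ Σ_{k=0}^{n-1} a_k ≤ √e · a_{n-1}`. -/
theorem sum_theta_last (n : ℕ) (hn : 1 ≤ n) (a : ℕ → ℝ) (ha : ∀ k, 0 ≤ a k)
    (hrec : ∀ k, k ≤ n - 2 → 2 * ((n - k - 1 : ℕ) : ℝ) * a k ≤ a (k + 1)) :
    a (n - 1) ≤ ∑ k ∈ Finset.range n, a k ∧
    ∑ k ∈ Finset.range n, a k ≤ Real.sqrt (Real.exp 1) * a (n - 1) := by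
  have key : ∀ j k : ℕ, k + j = n - 1 →
      (2 ^ j * (Nat.factorial j) : ℝ) * a k ≤ a (n - 1) := by
    intro j
    induction j with
    | zero => intro k hk; simp at hk; simp [hk]
    | succ j ih =>
      intro k hk
      have hk2 : k ≤ n - 2 := by omega
      have hnk : n - k - 1 = j + 1 := by omega
      have h1 := hrec k hk2
      rw [hnk] at h1
      have h2 := ih (k + 1) (by omega)
      have hpos : (0 : ℝ) ≤ 2 ^ j * (Nat.factorial j : ℝ) := by positivity
      calc (2 ^ (j+1) * (Nat.factorial (j+1)) : ℝ) * a k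
          = (2 ^ j * (Nat.factorial j)) * (2 * ((j:ℝ) + 1) * a k) := by
            push_cast [Nat.factorial_succ]; ring
        _ ≤ (2 ^ j * (Nat.factorial j)) * a (k + 1) := by
            apply mul_le_mul_of_nonneg_left _ hpos
            have : ((j : ℝ) + 1) = ((j + 1 : ℕ) : ℝ) := by push_cast; ring
            rw [this]; exact h1
        _ ≤ a (n - 1) := h2
  constructor
  · exact Finset.single_le_sum (fun k _ => ha k)
      (Finset.mem_range.mpr (by omega))
  · have hbound : ∀ k ∈ Finset.range n,
        a k ≤ a (n - 1) * (1/2 : ℝ) ^ (n - 1 - k) / (Nat.factorial (n - 1 - k)) := by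
      intro k hk
      rw [Finset.mem_range] at hk
      have h := key (n - 1 - k) k (by omega)
      have hp : (0 : ℝ) < 2 ^ (n - 1 - k) * (Nat.factorial (n - 1 - k) : ℝ) := by
        positivity
      rw [le_div_iff₀ (by positivity)]
      calc a k * (Nat.factorial (n - 1 - k) : ℝ)
          = (2 ^ (n-1-k) * (Nat.factorial (n-1-k)) * a k) * (1/2:ℝ)^(n-1-k) := by
            rw [one_div, inv_pow]; field_simp
        _ ≤ a (n-1) * (1/2:ℝ)^(n-1-k) := by
            apply mul_le_mul_of_nonneg_right h (by positivity)
    calc ∑ k ∈ Finset.range n, a k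
        ≤ ∑ k ∈ Finset.range n,
            a (n - 1) * (1/2 : ℝ) ^ (n - 1 - k) / (Nat.factorial (n - 1 - k)) :=
          Finset.sum_le_sum hbound
      _ = ∑ j ∈ Finset.range n, a (n - 1) * (1/2 : ℝ) ^ j / (Nat.factorial j) :=
          Finset.sum_range_reflect (fun j => a (n - 1) * (1/2 : ℝ) ^ j / (Nat.factorial j)) n
      _ = a (n - 1) * ∑ j ∈ Finset.range n, (1/2 : ℝ) ^ j / (Nat.factorial j) := by
          rw [Finset.mul_sum]; congr 1; ext j; ring
      _ ≤ a (n - 1) * Real.exp (1/2) := by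
          apply mul_le_mul_of_nonneg_left _ (ha _)
          exact Real.sum_le_exp_of_nonneg (by norm_num) n
      _ = Real.sqrt (Real.exp 1) * a (n - 1) := by
          rw [← Real.exp_half]; ring
end

section
/- Every d-combining tree-child network with n leaves and k < n-1 reticulation nodes has exactly 2(n-k-1) free edges, where a free edge is an edge from a tree node to a child that is not a reticulation node, counted only at tree nodes both of whose children are not reticulation nodes. -/
/-- In-degree of a vertex in a directed graph given by an edge relation. -/
noncomputable def indeg {V : Type} (E : V → V → Prop) (v : V) : ℕ := Nat.card {u // E u v}

/-- Out-degree of a vertex in a directed graph given by an edge relation. -/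
noncomputable def outdeg {V : Type} (E : V → V → Prop) (v : V) : ℕ := Nat.card {u // E v u}

def IsLeaf {V : Type} (E : V → V → Prop) (v : V) : Prop :=
  indeg E v = 1 ∧ outdeg E v = 0

def IsTreeNode {V : Type} (E : V → V → Prop) (v : V) : Prop :=
  indeg E v = 1 ∧ outdeg E v = 2

def IsRet (d : ℕ) {V : Type} (E : V → V → Prop) (v : V) : Prop :=
  indeg E v = d ∧ outdeg E v = 1

/-- A (rooted, bifurcating, `d`-combining) phylogenetic network with `n` leaves
on a vertex type `V`: a rooted acyclic digraph in which every vertex is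
reachable from the root, the root has in-degree 0 and out-degree 1, every
non-root vertex is a leaf (in-degree 1, out-degree 0), a tree node (in-degree
1, out-degree 2) or a reticulation node (in-degree `d`, out-degree 1), and the
leaves are bijectively labeled by `Fin n`. -/
structure PhyloNetwork (d n : ℕ) (V : Type) where
  E : V → V → Prop
  root : V
  acyclic : ∀ v, ¬ Relation.TransGen E v v
  reach : ∀ v, Relation.ReflTransGen E root v
  root_in : indeg E root = 0
  root_out : outdeg E root = 1
  label : Fin n → V
  label_leaf : ∀ i, IsLeaf E (label i)
  label_inj : Function.Injective label
  label_surj : ∀ v, IsLeaf E v → ∃ i, label i = v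
  classify : ∀ v, v ≠ root → IsLeaf E v ∨ IsTreeNode E v ∨ IsRet d E v

/-- Tree-child condition: every non-leaf vertex has a child which is not a
reticulation node. -/
def TreeChild (d : ℕ) {V : Type} (E : V → V → Prop) : Prop :=
  ∀ v, ¬ IsLeaf E v → ∃ u, E v u ∧ ¬ IsRet d E u

/-- One-component condition: every child of a reticulation node is a leaf. -/
def OneComponent (d : ℕ) {V : Type} (E : V → V → Prop) : Prop :=
  ∀ v, IsRet d E v → ∀ u, E v u → IsLeaf E u

/-- Number of reticulation nodes. -/
noncomputable def numRet (d : ℕ) {V : Type} (E : V → V → Prop) : ℕ := Nat.card {v // IsRet d E v}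


section Aux
open Finset
variable {V : Type} [Fintype V]

lemma natCard_filter (p : V → Prop) [DecidablePred p] :
    Nat.card {v // p v} = (Finset.univ.filter p).card := by
  classical
  simp [Nat.card_eq_fintype_card, Fintype.card_subtype]

lemma natCard_pairs (C : V → V → Prop) :
    Nat.card {p : V × V // C p.1 p.2} = ∑ v, Nat.card {u // C v u} := by
  classical
  rw [Nat.card_congr (Equiv.subtypeProdEquivSigmaSubtype C), Nat.card_eq_fintype_card,
    Fintype.card_sigma]
  simp [Nat.card_eq_fintype_card]

lemma natCard_pairs' (C : V → V → Prop) :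
    Nat.card {p : V × V // C p.1 p.2} = ∑ v, Nat.card {u // C u v} := by
  classical
  have h : Nat.card {p : V × V // C p.1 p.2} = Nat.card {p : V × V // C p.2 p.1} :=
    Nat.card_congr ((Equiv.prodComm V V).subtypeEquiv (fun p => Iff.rfl))
  rw [h, natCard_pairs (fun a b => C b a)]

lemma sum_ite_card (P : V → Prop) [DecidablePred P] (c : ℕ) :
    ∑ v, (if P v then c else 0) = c * (Finset.univ.filter P).card := by
  classical
  rw [← Finset.sum_filter, Finset.sum_const, smul_eq_mul, mul_comm]

end Aux


/-- Every `d`-combining tree-child network with `n` leaves and `k < n - 1`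
reticulation nodes has exactly `2(n-k-1)` free edges, where a free edge is an
edge emanating from a tree node none of whose children is a reticulation
node. -/
theorem free_edge_count {V : Type} [Fintype V] (d n : ℕ) (hd : 2 ≤ d)
    (N : PhyloNetwork d n V) (hTC : TreeChild d N.E) (hk : numRet d N.E < n - 1) :
    Nat.card {p : V × V //
        N.E p.1 p.2 ∧ IsTreeNode N.E p.1 ∧ ∀ u, N.E p.1 u → ¬ IsRet d N.E u} =
      2 * (n - numRet d N.E - 1) := by
  classical
  set E := N.E with hE
  have hrin : indeg E N.root = 0 := N.root_in
  have hrout : outdeg E N.root = 1 := N.root_out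
  have hclass : ∀ v, v ≠ N.root → IsLeaf E v ∨ IsTreeNode E v ∨ IsRet d E v := N.classify
  have hTC' : ∀ v, ¬ IsLeaf E v → ∃ u, E v u ∧ ¬ IsRet d E u := hTC
  set Fp : V → Prop := fun v => ∀ u, E v u → ¬ IsRet d E u with hFp
  -- per-vertex out-degree formula
  have hout : ∀ v, outdeg E v =
      (if IsTreeNode E v then 2 else 0) + (if IsRet d E v then 1 else 0)
        + (if v = N.root then 1 else 0) := by
    intro v
    by_cases hv : v = N.root
    · have hi : indeg E v = 0 := by rw [hv]; exact hrin
      have ho : outdeg E v = 1 := by rw [hv]; exact hrout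
      have h1 : ¬ IsTreeNode E v := fun h => by have := h.1; omega
      have h2 : ¬ IsRet d E v := fun h => by have := h.1; omega
      rw [if_neg h1, if_neg h2, if_pos hv, ho]
    · rcases hclass v hv with h | h | h
      · have h1 : ¬ IsTreeNode E v := fun h' => by have := h'.2; have := h.2; omega
        have h2 : ¬ IsRet d E v := fun h' => by have := h'.2; have := h.2; omega
        rw [if_neg h1, if_neg h2, if_neg hv]
        have := h.2; omega
      · have h2 : ¬ IsRet d E v := fun h' => by have := h'.1; have := h.1; omega
        rw [if_pos h, if_neg h2, if_neg hv]
        have := h.2; omega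
      · have h1 : ¬ IsTreeNode E v := fun h' => by have := h'.2; have := h.2; omega
        rw [if_neg h1, if_pos h, if_neg hv]
        have := h.2; omega
  -- per-vertex in-degree formula
  have hin : ∀ v, indeg E v =
      (if IsLeaf E v then 1 else 0) + (if IsTreeNode E v then 1 else 0)
        + (if IsRet d E v then d else 0) := by
    intro v
    by_cases hv : v = N.root
    · have hi : indeg E v = 0 := by rw [hv]; exact hrin
      have h0 : ¬ IsLeaf E v := fun h => by have := h.1; omega
      have h1 : ¬ IsTreeNode E v := fun h => by have := h.1; omega
      have h2 : ¬ IsRet d E v := fun h => by have := h.1; omega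
      rw [if_neg h0, if_neg h1, if_neg h2]; omega
    · rcases hclass v hv with h | h | h
      · have h1 : ¬ IsTreeNode E v := fun h' => by have := h'.2; have := h.2; omega
        have h2 : ¬ IsRet d E v := fun h' => by have := h'.2; have := h.2; omega
        rw [if_pos h, if_neg h1, if_neg h2]
        have := h.1; omega
      · have h0 : ¬ IsLeaf E v := fun h' => by have := h'.2; have := h.2; omega
        have h2 : ¬ IsRet d E v := fun h' => by have := h'.1; have := h.1; omega
        rw [if_neg h0, if_pos h, if_neg h2]
        have := h.1; omega
      · have h0 : ¬ IsLeaf E v := fun h' => by have := h'.2; have := h.2; omega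
        have h1 : ¬ IsTreeNode E v := fun h' => by have := h'.2; have := h.2; omega
        rw [if_neg h0, if_neg h1, if_pos h]
        have := h.1; omega
  -- handshake: total out-degree = total in-degree
  have hsum : ∑ v : V, outdeg E v = ∑ v : V, indeg E v := by
    have h1 := natCard_pairs (V := V) E
    have h2 := natCard_pairs' (V := V) E
    unfold outdeg indeg
    rw [← h1, ← h2]
  have hsum1 : ∑ v : V, outdeg E v =
      2 * (Finset.univ.filter (fun v => IsTreeNode E v)).card
        + 1 * (Finset.univ.filter (fun v => IsRet d E v)).card + 1 := by
    rw [Finset.sum_congr rfl (fun v _ => hout v), Finset.sum_add_distrib,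
      Finset.sum_add_distrib, sum_ite_card, sum_ite_card]
    simp [Finset.sum_ite_eq']
  have hsum2 : ∑ v : V, indeg E v =
      1 * (Finset.univ.filter (fun v => IsLeaf E v)).card
        + 1 * (Finset.univ.filter (fun v => IsTreeNode E v)).card
        + d * (Finset.univ.filter (fun v => IsRet d E v)).card := by
    rw [Finset.sum_congr rfl (fun v _ => hin v), Finset.sum_add_distrib,
      Finset.sum_add_distrib, sum_ite_card, sum_ite_card, sum_ite_card]
  -- number of leaves is n
  have hLn : (Finset.univ.filter (fun v => IsLeaf E v)).card = n := by
    have e : Fin n ≃ {v // IsLeaf E v} :=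
      Equiv.ofBijective (fun i => ⟨N.label i, N.label_leaf i⟩)
        ⟨fun i j h => N.label_inj (congrArg Subtype.val h),
         fun v => by obtain ⟨i, hi⟩ := N.label_surj v v.2; exact ⟨i, Subtype.ext hi⟩⟩
    rw [← natCard_filter, ← Nat.card_congr e, Nat.card_eq_fintype_card, Fintype.card_fin]
  -- numRet = R
  have hRR : numRet d E = (Finset.univ.filter (fun v => IsRet d E v)).card := by
    rw [numRet, natCard_filter]
  -- counting edges into reticulation nodes, by head
  have hBl : Nat.card {p : V × V // E p.1 p.2 ∧ IsRet d E p.2} =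
      d * (Finset.univ.filter (fun v => IsRet d E v)).card := by
    rw [natCard_pairs' (fun a b => E a b ∧ IsRet d E b)]
    rw [Finset.sum_congr rfl (fun v _ => ?_), sum_ite_card (fun v => IsRet d E v) d]
    show Nat.card {u // E u v ∧ IsRet d E v} = if IsRet d E v then d else 0
    by_cases hv : IsRet d E v
    · rw [if_pos hv, Nat.card_congr (Equiv.subtypeEquivRight (q := fun u => E u v)
        (fun u => by simp [hv]))]
      exact hv.1
    · rw [if_neg hv]
      have : IsEmpty {u // E u v ∧ IsRet d E v} := ⟨fun u => hv u.2.2⟩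
      exact Nat.card_of_isEmpty
  -- counting edges into reticulation nodes, by tail
  have hBr : Nat.card {p : V × V // E p.1 p.2 ∧ IsRet d E p.2} =
      1 * (Finset.univ.filter (fun v => IsTreeNode E v ∧ ¬ Fp v)).card := by
    rw [natCard_pairs (fun a b => E a b ∧ IsRet d E b)]
    rw [Finset.sum_congr rfl (fun v _ => ?_),
      sum_ite_card (fun v => IsTreeNode E v ∧ ¬ Fp v) 1]
    show Nat.card {u // E v u ∧ IsRet d E u} = if IsTreeNode E v ∧ ¬ Fp v then 1 else 0
    rw [natCard_filter]
    have hab : (Finset.univ.filter (fun u => E v u ∧ IsRet d E u)).card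
        + (Finset.univ.filter (fun u => E v u ∧ ¬ IsRet d E u)).card = outdeg E v := by
      have h := Finset.card_filter_add_card_filter_not
        (s := Finset.univ.filter (fun u => E v u)) (p := fun u => IsRet d E u)
      rw [Finset.filter_filter, Finset.filter_filter] at h
      rw [h, outdeg, natCard_filter]
    by_cases hfree : Fp v
    · rw [if_neg (fun h => h.2 hfree), Finset.card_eq_zero.mpr
        (Finset.filter_eq_empty_iff.mpr (fun u _ h => hfree u h.1 h.2))]
    · have hnf := hfree
      have hfree' : ∃ u, E v u ∧ IsRet d E u := by
        by_contra hcon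
        push_neg at hcon
        exact hnf (fun u hu hr => hcon u hu hr)
      obtain ⟨u, hu, hru⟩ := hfree'
      have ha1 : 1 ≤ (Finset.univ.filter (fun u => E v u ∧ IsRet d E u)).card :=
        Finset.card_pos.mpr ⟨u, Finset.mem_filter.mpr ⟨Finset.mem_univ u, hu, hru⟩⟩
      have hnl : ¬ IsLeaf E v := fun h => by
        have := h.2; omega
      obtain ⟨w, hw, hnw⟩ := hTC' v hnl
      have hb1 : 1 ≤ (Finset.univ.filter (fun u => E v u ∧ ¬ IsRet d E u)).card :=
        Finset.card_pos.mpr ⟨w, Finset.mem_filter.mpr ⟨Finset.mem_univ w, hw, hnw⟩⟩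
      by_cases htv : IsTreeNode E v
      · rw [if_pos ⟨htv, hnf⟩]
        have := htv.2; omega
      · exfalso
        by_cases hv : v = N.root
        · have ho : outdeg E v = 1 := by rw [hv]; exact hrout
          omega
        · rcases hclass v hv with h | h | h
          · exact hnl h
          · exact htv h
          · have := h.2; omega
  -- split tree nodes into free and non-free
  have hC : (Finset.univ.filter (fun v => IsTreeNode E v ∧ Fp v)).card
      + (Finset.univ.filter (fun v => IsTreeNode E v ∧ ¬ Fp v)).card
      = (Finset.univ.filter (fun v => IsTreeNode E v)).card := by
    have h := Finset.card_filter_add_card_filter_not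
      (s := Finset.univ.filter (fun v => IsTreeNode E v)) (p := fun v => Fp v)
    rw [Finset.filter_filter, Finset.filter_filter] at h
    exact h
  -- the goal's count equals twice the number of free tree nodes
  have hgoal : Nat.card {p : V × V // E p.1 p.2 ∧ IsTreeNode E p.1 ∧ Fp p.1} =
      2 * (Finset.univ.filter (fun v => IsTreeNode E v ∧ Fp v)).card := by
    rw [natCard_pairs (fun a b => E a b ∧ IsTreeNode E a ∧ Fp a)]
    rw [Finset.sum_congr rfl (fun v _ => ?_),
      sum_ite_card (fun v => IsTreeNode E v ∧ Fp v) 2]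
    show Nat.card {u // E v u ∧ IsTreeNode E v ∧ Fp v}
        = if IsTreeNode E v ∧ Fp v then 2 else 0
    by_cases hc : IsTreeNode E v ∧ Fp v
    · rw [if_pos hc, Nat.card_congr (Equiv.subtypeEquivRight (q := fun u => E v u)
        (fun u => ⟨fun h => h.1, fun h => ⟨h, hc⟩⟩))]
      exact hc.1.2
    · rw [if_neg hc]
      have : IsEmpty {u // E v u ∧ IsTreeNode E v ∧ Fp v} := ⟨fun u => hc u.2.2⟩
      exact Nat.card_of_isEmpty
  have hmain : Nat.card {p : V × V // E p.1 p.2 ∧ IsTreeNode E p.1 ∧ Fp p.1} =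
      2 * (n - numRet d E - 1) := by
    rw [hgoal]
    have hB := hBl.symm.trans hBr
    rw [hsum1, hsum2, hLn] at hsum
    rw [hB] at hsum
    omega
  exact hmain
end

section
/- Let C^(d)_n be the set of words over the alphabet {ω_1,...,ω_n} in which each letter occurs exactly d+1 times, such that in every prefix the letter ω_i has either occurred at most d-2 times, or otherwise the number of occurrences of ω_i is at least the number of occurrences of ω_j for every j > i. Then every word in C^(d)_n has a unique suffix of the form ω_n ω_m ω_{m+1} ⋯ ω_{n-1} ω_n for some 1 ≤ m ≤ n (interpreting the case m = n as the suffix ω_n ω_n). -/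
/-- The class `C^(d)_n` of words over the alphabet `{1,…,n}` (as lists of
naturals) in which each letter occurs exactly `d+1` times and in every prefix
each letter `i` has either occurred at most `d-2` times, or else has occurred
at least as often as every letter `j > i`. -/
def WordInC (d n : ℕ) (w : List ℕ) : Prop :=
  (∀ i, 1 ≤ i → i ≤ n → w.count i = d + 1) ∧
  (∀ i, i = 0 ∨ n < i → w.count i = 0) ∧
  (∀ p, p <+: w → ∀ i, p.count i ≤ d - 2 ∨ ∀ j, i < j → p.count j ≤ p.count i)

/-- The suffix `ω_n ω_m ω_{m+1} ⋯ ω_{n-1} ω_n` (for `m = n` this is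
`ω_n ω_n`). -/
def csuffix (n m : ℕ) : List ℕ := n :: (List.range' m (n - m) ++ [n])

lemma count_range' (s len i : ℕ) :
    (List.range' s len).count i = if s ≤ i ∧ i < s + len then 1 else 0 := by
  by_cases h : s ≤ i ∧ i < s + len
  · rw [if_pos h]
    exact List.count_eq_one_of_mem (List.nodup_range' (s := s) (n := len)) (List.mem_range'_1.mpr h)
  · rw [if_neg h]
    exact List.count_eq_zero_of_not_mem (fun hm => h (List.mem_range'_1.mp hm))

lemma count_concat_self (a : ℕ) (p : List ℕ) :
    (p ++ [a]).count a = p.count a + 1 := by simp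

lemma count_concat_ne (a b : ℕ) (h : b ≠ a) (p : List ℕ) :
    (p ++ [a]).count b = p.count b := by
  have h1 : List.count b [a] = 0 := List.count_eq_zero.mpr (by simp [h])
  rw [List.count_append, h1]
  omega

lemma csuffix_eq (n m : ℕ) (hm : m ≤ n) :
    csuffix n m = n :: List.range' m (n - m + 1) := by
  have h : m + (n - m) = n := by omega
  rw [csuffix, List.range'_1_concat, h]

lemma key (d n : ℕ) (hd : 2 ≤ d) (w : List ℕ) (hw : WordInC d n w) :
    ∀ k, 1 ≤ k → k ≤ n → ∀ v, w = v ++ List.range' k (n - k + 1) →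
    ∃ m, 1 ≤ m ∧ m ≤ n ∧ csuffix n m <:+ w := by
  obtain ⟨hc1, hc0, hpre⟩ := hw
  intro k
  induction k using Nat.strong_induction_on with
  | _ k ih =>
  intro hk1 hkn v hv
  -- counts in v
  have hvc : ∀ i, v.count i =
      w.count i - (if k ≤ i ∧ i < k + (n - k + 1) then 1 else 0) := by
    intro i
    rw [hv, List.count_append, count_range']
    omega
  -- v is nonempty
  have hvn : v.count n = d - 1 + 1 := by
    rw [hvc n, hc1 n (by omega) le_rfl, if_pos (by omega : k ≤ n ∧ n < k + (n - k + 1))]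
    omega
  rcases List.eq_nil_or_concat v with rfl | ⟨p, a, hpa⟩
  · rw [List.count_nil] at hvn; omega
  rw [List.concat_eq_append] at hpa
  subst hpa
  -- a is between 1 and n
  have ha_pos : 1 ≤ a ∧ a ≤ n := by
    by_contra hcon
    have h0 : w.count a = 0 := hc0 a (by omega)
    have h2 := hvc a
    rw [h0, count_concat_self] at h2
    omega
  -- p is a prefix of w
  have hp : p <+: w := ⟨[a] ++ List.range' k (n - k + 1), by rw [hv]; simp⟩
  by_cases han : a = n
  · -- found the n: suffix csuffix n k
    refine ⟨k, hk1, hkn, ⟨p, ?_⟩⟩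
    rw [csuffix_eq n k hkn, hv, han]
    simp
  · -- a ≠ n : show a = k - 1
    have hcount_w_a : w.count a = d + 1 := hc1 a ha_pos.1 ha_pos.2
    have hprea := hpre p hp a
    have hpa_cnt := hvc a
    rw [count_concat_self, hcount_w_a] at hpa_cnt
    have hpn_cnt := hvc n
    rw [count_concat_ne a n (fun h => han h.symm),
      hc1 n (by omega) le_rfl, if_pos (by omega : k ≤ n ∧ n < k + (n - k + 1))] at hpn_cnt
    have hka : a < k := by
      by_contra hge
      push_neg at hge
      -- k ≤ a < n, count_p a = d - 1
      rw [if_pos (by omega : k ≤ a ∧ a < k + (n - k + 1))] at hpa_cnt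
      rcases hprea with h | h
      · omega
      · have hn' := h n (by omega)
        omega
    have hak : a = k - 1 := by
      by_contra hne
      -- a + 1 < k : count_p a = d, count_p (a+1) = d + 1
      rw [if_neg (by omega)] at hpa_cnt
      have h2 := hvc (a + 1)
      rw [count_concat_ne a (a + 1) (by omega),
        hc1 (a + 1) (by omega) (by omega), if_neg (by omega)] at h2
      rcases hprea with h | h
      · omega
      · have := h (a + 1) (by omega)
        omega
    -- recurse with k - 1 = a
    refine ih a (by omega) ha_pos.1 (by omega) p ?_
    rw [hv]
    have h1 : List.range' a (n - a + 1) = a :: List.range' (a + 1) (n - a) :=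
      List.range'_succ
    have h2 : a + 1 = k ∧ n - a = n - k + 1 := by omega
    rw [h1, h2.1, ← h2.2]
    simp

lemma csuffix_count_n (n m : ℕ) (hm : m ≤ n) : (csuffix n m).count n = 2 := by
  have hnm : n ∉ List.range' m (n - m) := by
    intro h
    rw [List.mem_range'_1] at h
    omega
  rw [csuffix, List.count_cons, List.count_append, List.count_eq_zero_of_not_mem hnm]
  simp

lemma csuffix_length (n m : ℕ) : (csuffix n m).length = n - m + 2 := by
  simp only [csuffix, List.length_cons, List.length_append, List.length_range',
    List.length_singleton, List.length_nil]

lemma not_both (n m m' : ℕ) (hm : m ≤ n) (hm' : m' ≤ n) (hlt : m < m') (w : List ℕ)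
    (hs : csuffix n m <:+ w) (hs' : csuffix n m' <:+ w) : False := by
  have hlen : (csuffix n m').length < (csuffix n m).length := by
    rw [csuffix_length, csuffix_length]; omega
  have hss : csuffix n m' <:+ csuffix n m := by
    rcases List.suffix_or_suffix_of_suffix hs hs' with h | h
    · exact absurd (List.IsSuffix.length_le h) (by omega)
    · exact h
  -- a proper suffix of csuffix n m is a suffix of its tail
  obtain ⟨u, hu⟩ := hss
  rcases u with _ | ⟨b, u⟩
  · rw [List.nil_append] at hu
    rw [hu] at hlen
    exact absurd hlen (lt_irrefl _)
  · have htail : u ++ csuffix n m' = List.range' m (n - m) ++ [n] := by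
      have h2 := congrArg List.tail hu
      simp only [csuffix] at h2 ⊢
      simpa using h2
    have hcle : (csuffix n m').count n ≤ (List.range' m (n - m) ++ [n]).count n :=
      List.IsSuffix.count_le n ⟨u, htail⟩
    rw [csuffix_count_n n m' hm'] at hcle
    have hnm : n ∉ List.range' m (n - m) := by
      intro h
      rw [List.mem_range'_1] at h
      omega
    rw [List.count_append, List.count_eq_zero_of_not_mem hnm] at hcle
    simp at hcle

/-- Every word in `C^(d)_n` has a unique suffix of the form
`ω_n ω_m ω_{m+1} ⋯ ω_{n-1} ω_n` with `1 ≤ m ≤ n`. -/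
theorem unique_suffix (d n : ℕ) (hd : 2 ≤ d) (hn : 1 ≤ n) (w : List ℕ)
    (hw : WordInC d n w) :
    ∃! m : ℕ, 1 ≤ m ∧ m ≤ n ∧ csuffix n m <:+ w := by
  have hw' := hw
  obtain ⟨hc1, hc0, hpre⟩ := hw
  -- w ends with n
  have hwn : w.count n = d + 1 := hc1 n hn le_rfl
  rcases List.eq_nil_or_concat w with rfl | ⟨p, a, hpa⟩
  · rw [List.count_nil] at hwn; omega
  rw [List.concat_eq_append] at hpa
  subst hpa
  have ha_pos : 1 ≤ a ∧ a ≤ n := by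
    by_contra hcon
    have h0 : (p ++ [a]).count a = 0 := hc0 a (by omega)
    rw [count_concat_self] at h0
    omega
  have han : a = n := by
    by_contra hne
    have hp : p <+: p ++ [a] := ⟨[a], rfl⟩
    have hpa_cnt : p.count a = d := by
      have h := hc1 a ha_pos.1 ha_pos.2
      rw [count_concat_self] at h
      omega
    have hpn_cnt : p.count n = d + 1 := by
      rw [count_concat_ne a n (fun h => hne h.symm)] at hwn
      exact hwn
    rcases hpre p hp a with h | h
    · omega
    · have := h n (by omega)
      omega
  subst han
  have hex : ∃ m, 1 ≤ m ∧ m ≤ a ∧ csuffix a m <:+ p ++ [a] := by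
    refine key d a hd (p ++ [a]) hw' a hn le_rfl p ?_
    simp
  obtain ⟨m, hm1, hm2, hms⟩ := hex
  refine ⟨m, ⟨hm1, hm2, hms⟩, ?_⟩
  rintro m' ⟨hm'1, hm'2, hm's⟩
  rcases lt_trichotomy m' m with h | h | h
  · exact absurd (not_both a m' m hm'2 hm2 h _ hm's hms) not_false
  · exact h
  · exact absurd (not_both a m m' hm2 hm'2 h _ hms hm's) not_false
end

section
/- Define e^(d)_{n,m} := b^(d)_{(n+m)/2,(n-m)/2} / (λ(d)^((n+m)/2) · (((n+m)/2)!)^(d-1)) for n ≡ m (mod 2), where λ(d) = (d+1)^(d-1)/(d-1)!. Then e^(d)_{n,m} satisfies the recurrence e^(d)_{n,m} = μ^(d)_{n,m} · e^(d)_{n-1,m+1} + ν^(d)_{n,m} · e^(d)_{n-1,m-1} with μ^(d)_{n,m} = 1 + 2(d-1)/((d+1)n+(d-1)m-2(d+1)) and ν^(d)_{n,m} = Π_{i=2}^d (1 − 2(m+i)/((d+1)(n+m))) for n ≥ 3, m ≥ 0. -/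
/-- Change of variables: with `λ(d) = (d+1)^(d-1)/(d-1)!` and
`e_{N,M} := b_{(N+M)/2,(N-M)/2} / (λ(d)^((N+M)/2) · (((N+M)/2)!)^(d-1))` for
`N ≡ M (mod 2)` (together with the boundary values `e_{N,-1} = 0` and
`e_{N,M} = 0` for `M > N`), the sequence `e` satisfies
`e_{N,M} = μ_{N,M}·e_{N-1,M+1} + ν_{N,M}·e_{N-1,M-1}` for `N ≥ 3`, `M ≥ 0`,
where `μ_{N,M} = 1 + 2(d-1)/((d+1)N+(d-1)M-2(d+1))` and
`ν_{N,M} = Π_{i=2}^d (1 - 2(M+i)/((d+1)(N+M)))`. -/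
theorem e_recurrence (d : ℕ) (hd : 2 ≤ d) (b : ℕ → ℤ → ℚ)
    (h11 : b 1 1 = 1)
    (hneg : ∀ n : ℕ, 2 ≤ n → b n (-1) = 0)
    (h10 : b 1 0 = 0)
    (hgt : ∀ (n : ℕ) (m : ℤ), (n : ℤ) < m → b n m = 0)
    (hrec : ∀ n : ℕ, 2 ≤ n → ∀ m : ℤ, 0 ≤ m → m ≤ (n : ℤ) →
      b n m = (((d : ℚ) * n + (m : ℚ) - 2) / ((d : ℚ) * n + (m : ℚ) - d - 1)) * b n (m - 1)
        + ((((d : ℤ) * n + m - 2).toNat.choose (d - 1) : ℚ)) * b (n - 1) m)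
    (e : ℤ → ℤ → ℚ)
    (he : ∀ N M : ℤ, 0 ≤ M → M ≤ N → (N + M) % 2 = 0 →
      e N M = b ((N + M) / 2).toNat ((N - M) / 2) /
        ((((d : ℚ) + 1) ^ (d - 1) / (Nat.factorial (d - 1) : ℚ)) ^ ((N + M) / 2).toNat *
          (Nat.factorial ((N + M) / 2).toNat : ℚ) ^ (d - 1)))
    (heneg : ∀ N : ℤ, e N (-1) = 0)
    (hegt : ∀ N M : ℤ, N < M → e N M = 0) :
    ∀ N M : ℤ, 3 ≤ N → 0 ≤ M → M ≤ N → (N + M) % 2 = 0 →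
      e N M =
        (1 + 2 * ((d : ℚ) - 1) /
            (((d : ℚ) + 1) * (N : ℚ) + ((d : ℚ) - 1) * (M : ℚ) - 2 * ((d : ℚ) + 1))) *
          e (N - 1) (M + 1)
        + (∏ i ∈ Finset.Icc 2 d,
            (1 - 2 * ((M : ℚ) + (i : ℚ)) / (((d : ℚ) + 1) * ((N : ℚ) + (M : ℚ))))) *
          e (N - 1) (M - 1) := by
  intro N M hN hM hMN hpar
  set lam : ℚ := ((d : ℚ) + 1) ^ (d - 1) / (Nat.factorial (d - 1) : ℚ) with hlam
  have h2 : (2:ℤ) ∣ N + M := Int.dvd_of_emod_eq_zero hpar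
  obtain ⟨a', ha'⟩ := h2
  have h2' : (2:ℤ) ∣ N - M := by omega
  obtain ⟨c', hc'⟩ := h2'
  set a : ℕ := a'.toNat with haa
  set c : ℕ := c'.toNat with hcc
  have haZ : (a : ℤ) = a' := by omega
  have hcZ : (c : ℤ) = c' := by omega
  clear_value a c
  have ha2' : 2 ≤ a := by omega
  have hca : c ≤ a := by omega
  have hNi : N = (a : ℤ) + c := by omega
  have hMi : M = (a : ℤ) - c := by omega
  have hNQ : (N : ℚ) = (a : ℚ) + c := by rw [hNi]; push_cast; ring
  have hMQ : (M : ℚ) = (a : ℚ) - c := by rw [hMi]; push_cast; ring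
  obtain ⟨k, hk1, hk⟩ : ∃ k, 1 ≤ k ∧ a = k + 1 := ⟨a - 1, by omega, by omega⟩
  -- basic bounds
  have hX : d + 2 ≤ d * a + c := by
    have h1 : d * 2 ≤ d * a := Nat.mul_le_mul (le_refl d) ha2'
    have h2 : d + 2 ≤ d * 2 := by omega
    exact le_trans (le_trans h2 h1) (Nat.le_add_right _ _)
  have hXQ : ((d:ℚ) + 2) ≤ (d:ℚ) * a + c := by
    have := (Nat.cast_le (α := ℚ)).mpr hX
    push_cast at this; linarith
  have haQ0 : ((a:ℚ)) ≠ 0 := Nat.cast_ne_zero.mpr (by omega)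
  have hd1Q : ((d:ℚ) + 1) ≠ 0 := by positivity
  have hfacQ : (0:ℚ) < ((d-1).factorial : ℚ) := by exact_mod_cast Nat.factorial_pos _
  have hlampos : (0:ℚ) < lam := by rw [hlam]; exact div_pos (by positivity) hfacQ
  clear_value lam
  have hdenQ : ((d:ℚ) * a + c - d - 1) ≠ 0 := by
    have : (0:ℚ) < (d:ℚ) * a + c - d - 1 := by linarith
    exact this.ne'
  -- rewrite e N M
  have heNM : e N M = b a (c:ℤ) / (lam ^ a * ((a.factorial : ℚ)) ^ (d-1)) := by
    have h3 := he N M hM hMN hpar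
    rw [show (N + M)/2 = (a:ℤ) from by omega, show (N - M)/2 = (c:ℤ) from by omega,
      Int.toNat_natCast] at h3
    exact h3
  have E1 : e (N-1) (M+1) = b a ((c:ℤ) - 1) / (lam ^ a * ((a.factorial : ℚ)) ^ (d-1)) := by
    rcases Nat.eq_zero_or_pos c with hc | hc
    · have h1 : e (N-1) (M+1) = 0 := hegt _ _ (by omega)
      have h2 : b a ((c:ℤ) - 1) = 0 := by
        rw [show ((c:ℤ) - 1) = -1 from by omega]
        exact hneg a ha2'
      rw [h1, h2, zero_div]
    · have h3 := he (N-1) (M+1) (by omega) (by omega) (by omega)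
      rw [show ((N-1) + (M+1))/2 = (a:ℤ) from by omega,
        show ((N-1) - (M+1))/2 = (c:ℤ) - 1 from by omega, Int.toNat_natCast] at h3
      exact h3
  have E2 : e (N-1) (M-1) = b k (c:ℤ) / (lam ^ k * ((k.factorial : ℚ)) ^ (d-1)) := by
    rcases eq_or_lt_of_le hca with hc | hc
    · have h1 : e (N-1) (M-1) = 0 := by
        rw [show M - 1 = -1 from by omega]
        exact heneg _
      have h2 : b k (c:ℤ) = 0 := hgt k (c:ℤ) (by omega)
      rw [h1, h2, zero_div]
    · have h3 := he (N-1) (M-1) (by omega) (by omega) (by omega)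
      rw [show ((N-1) + (M-1))/2 = (k:ℤ) from by omega,
        show ((N-1) - (M-1))/2 = (c:ℤ) from by omega, Int.toNat_natCast] at h3
      exact h3
  -- the b-recurrence specialized
  have htn : ((d:ℤ) * (a:ℤ) + (c:ℤ) - 2).toNat = d * a + c - 2 := by
    have h1 : ((d:ℤ) * (a:ℤ)) = ((d * a : ℕ) : ℤ) := by push_cast; ring
    rw [h1]; omega
  have hB := hrec a ha2' (c:ℤ) (by omega) (by omega)
  rw [htn] at hB
  push_cast at hB
  rw [show a - 1 = k from by omega] at hB
  -- mu identity
  have hμ : (1 + 2 * ((d : ℚ) - 1) /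
      (((d : ℚ) + 1) * (N : ℚ) + ((d : ℚ) - 1) * (M : ℚ) - 2 * ((d : ℚ) + 1))) =
      ((d:ℚ) * a + c - 2) / ((d:ℚ) * a + c - (d:ℚ) - 1) := by
    rw [hNQ, hMQ]
    rw [show ((d:ℚ)+1) * ((a:ℚ)+c) + ((d:ℚ)-1) * ((a:ℚ)-c) - 2*((d:ℚ)+1)
        = 2 * ((d:ℚ) * a + (c:ℚ) - d - 1) from by ring]
    field_simp
    ring
  -- nu identity
  have hν : (∏ i ∈ Finset.Icc 2 d,
      (1 - 2 * ((M : ℚ) + (i : ℚ)) / (((d : ℚ) + 1) * ((N : ℚ) + (M : ℚ)))))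
      * (lam * ((a:ℚ)) ^ (d-1)) = (((d * a + c - 2).choose (d-1) : ℕ) : ℚ) := by
    have e1 : ∀ i ∈ Finset.Icc 2 d,
        (1 - 2 * ((M : ℚ) + (i : ℚ)) / (((d : ℚ) + 1) * ((N : ℚ) + (M : ℚ))))
        = ((d * a + c - i : ℕ) : ℚ) / (((d:ℚ)+1) * a) := by
      intro i hi
      obtain ⟨hi1, hi2⟩ := Finset.mem_Icc.mp hi
      have hle : i ≤ d * a + c := le_trans hi2 (le_trans (by omega) hX)
      rw [Nat.cast_sub hle]
      push_cast
      rw [hNQ, hMQ]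
      rw [show ((a:ℚ)+c) + ((a:ℚ)-c) = 2 * (a:ℚ) from by ring]
      field_simp
      ring
    rw [Finset.prod_congr rfl e1, Finset.prod_div_distrib, Finset.prod_const, Nat.card_Icc,
      show d + 1 - 2 = d - 1 from by omega, ← Nat.cast_prod]
    have e2 : ∏ i ∈ Finset.Icc 2 d, (d * a + c - i) = (d * a + c - 2).descFactorial (d-1) := by
      rw [← Finset.Ico_add_one_right_eq_Icc, Finset.prod_Ico_eq_prod_range, Nat.descFactorial_eq_prod_range]
      apply Finset.prod_congr (by congr 1)
      intro j _
      rw [Nat.sub_sub]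
    rw [e2, Nat.descFactorial_eq_factorial_mul_choose, hlam, mul_pow]
    push_cast
    have hfac0 : ((d-1).factorial : ℚ) ≠ 0 := hfacQ.ne'
    field_simp
  -- denominator factorization
  have hD : lam ^ a * ((a.factorial : ℚ)) ^ (d-1)
      = (lam ^ k * ((k.factorial : ℚ)) ^ (d-1)) * (lam * ((a:ℚ)) ^ (d-1)) := by
    rw [hk, pow_succ, Nat.factorial_succ]
    push_cast
    rw [mul_pow]
    ring
  -- assemble
  rw [heNM, E1, E2, hμ, hB, ← hν, hD]
  have hT : lam * ((a:ℚ)) ^ (d-1) ≠ 0 :=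
    mul_ne_zero hlampos.ne' (pow_ne_zero _ haQ0)
  have hD2 : lam ^ k * ((k.factorial : ℚ)) ^ (d-1) ≠ 0 :=
    mul_ne_zero (pow_ne_zero _ hlampos.ne')
      (pow_ne_zero _ (by exact_mod_cast (Nat.factorial_pos k).ne'))
  field_simp
end
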